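/- Let E be a Hilbert C*-module over a unital C*-algebra A and c ∈ E with B(c,c) = 0, i.e., (1 − θ_{c,c})(x·(1 − ⟨c,c⟩)) = 0 for all x ∈ E. Then c is a tripotent: c·⟨c,c⟩ = c. -/

import Mathlib

/-! Put `a = ⟪c, c⟫` and `u = 1 - a`. Taking `x = c` in the hypothesis gives `c·u² = 0`. As `u` is
self-adjoint and commutes with `a`, `⟪c·u, c·u⟫ = u a u = a u² = ⟪c, c·u²⟫ = 0`, so `c·u = 0`,
i.e. `c·a = c`. -/

open scoped RightActions

/-- The Hilbert C⋆-module class as Mathlib defined it in December 2024 (a right `A`-module,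
via `SMul Aᵐᵒᵖ E`); Mathlib's current `CStarModule` uses a left `A`-action instead. -/
class OldCStarModule (A E : Type*) [NonUnitalSemiring A] [StarRing A] [Module ℂ A]
    [AddCommGroup E] [Module ℂ E] [PartialOrder A] [SMul Aᵐᵒᵖ E] [Norm A] [Norm E]
    extends Inner A E where
  inner_add_right {x} {y} {z} : inner x (y + z) = inner x y + inner x z
  inner_self_nonneg {x} : 0 ≤ inner x x
  inner_self {x} : inner x x = 0 ↔ x = 0
  inner_op_smul_right {a : A} {x y : E} : inner x (y <• a) = inner x y * a
  inner_smul_right_complex {z : ℂ} {x} {y} : inner x (z • y) = z • inner x y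
  star_inner x y : star (inner x y) = inner y x
  norm_eq_sqrt_norm_inner_self x : ‖x‖ = √‖inner x x‖

variable {A : Type*} [CStarAlgebra A] [PartialOrder A] [StarOrderedRing A]
variable {E : Type*} [NormedAddCommGroup E] [NormedSpace ℂ E] [Module Aᵐᵒᵖ E]
  [SMulCommClass ℂ Aᵐᵒᵖ E] [OldCStarModule A E] [CompleteSpace E]

local notation "⟪" x ", " y "⟫" => inner (𝕜 := A) x y


omit [StarOrderedRing A] [SMulCommClass ℂ Aᵐᵒᵖ E] [CompleteSpace E] in
theorem OldCStarModule.inner_zero_right (x : E) : ⟪x, (0 : E)⟫ = 0 := by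
  have h := OldCStarModule.inner_add_right (A := A) (x := x) (y := (0 : E)) (z := 0)
  rwa [add_zero, left_eq_add] at h

omit [StarOrderedRing A] [SMulCommClass ℂ Aᵐᵒᵖ E] [CompleteSpace E] in
theorem OldCStarModule.inner_op_smul_left (a : A) (x y : E) :
    ⟪x <• a, y⟫ = star a * ⟪x, y⟫ := by
  rw [← OldCStarModule.star_inner (A := A) y, OldCStarModule.inner_op_smul_right, star_mul,
    OldCStarModule.star_inner]

omit [StarOrderedRing A] [SMulCommClass ℂ Aᵐᵒᵖ E] [CompleteSpace E] in
theorem OldCStarModule.inner_op_smul_op_smul_self (x : E) (u : A) :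
    ⟪x <• u, x <• u⟫ = star u * ⟪x, x⟫ * u := by
  rw [OldCStarModule.inner_op_smul_left, OldCStarModule.inner_op_smul_right, mul_assoc]

omit [StarOrderedRing A] [SMulCommClass ℂ Aᵐᵒᵖ E] [CompleteSpace E] in
theorem OldCStarModule.op_smul_eq_zero_of_op_smul_mul_self_eq_zero {x : E} {u : A}
    (hu : IsSelfAdjoint u) (hcomm : Commute u ⟪x, x⟫) (hx : x <• (u * u) = 0) : x <• u = 0 := by
  have hinner : ⟪x <• u, x <• u⟫ = ⟪x, x <• (u * u)⟫ := by
    rw [OldCStarModule.inner_op_smul_op_smul_self, OldCStarModule.inner_op_smul_right, hu.star_eq,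
      hcomm.eq, mul_assoc]
  rw [← OldCStarModule.inner_self (A := A), hinner, hx, OldCStarModule.inner_zero_right]

/-- If `B(c,c) = 0` then `c` is a tripotent: `c·⟪c,c⟫ = c`. -/
theorem stmt19 (c : E)
    (h : ∀ x : E, (x <• (1 - ⟪c, c⟫)) - c <• ⟪c, x <• (1 - ⟪c, c⟫)⟫ = 0) :
    c <• ⟪c, c⟫ = c := by
  set a := ⟪c, c⟫ with ha
  have op_smul_sub : ∀ b b' : A, c <• (b - b') = c <• b - c <• b' := fun b b' => by
    rw [MulOpposite.op_sub, sub_smul]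
  have hsq : c <• ((1 - a) * (1 - a)) = 0 := by
    have hc := h c
    rwa [OldCStarModule.inner_op_smul_right, ← ha, ← op_smul_sub, ← one_sub_mul] at hc
  have hu : IsSelfAdjoint (1 - a) := (IsSelfAdjoint.one A).sub (OldCStarModule.star_inner c c)
  have hzero : c <• (1 - a) = 0 :=
    OldCStarModule.op_smul_eq_zero_of_op_smul_mul_self_eq_zero hu
      ((Commute.one_left a).sub_left (Commute.refl a)) hsq
  rw [op_smul_sub, sub_eq_zero, MulOpposite.op_one, one_smul] at hzero
  exact hzero.symm
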